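/- Let 0 < r < 1 and define g_r(θ) = 3 Arg(1 + r e^{iθ}) − Arg(1 + r e^{i(θ+2φ(θ))}), where φ(θ) = Arg(3 + r e^{iθ}). Then g_r'(θ) > 0 for 0 < θ < π − arccos r. -/

import Mathlib

set_option maxHeartbeats 2000000

open Real Complex

lemma keyNN (r s : ℝ) (h0 : 0 < r) (h1 : r < 1) (h2 : -r^2 < s) (h3 : s < r) :
    0 < 54*s + 144*s^2 + 156*s^3 + 80*s^4 + 16*s^5 + 72*r^2 + 186*r^2*s + 216*r^2*s^2
      + 128*r^2*s^3 + 32*r^2*s^4 - 24*r^4 - 30*r^4*s - 8*r^4*s^2 + 4*r^4*s^3 - 2*r^6*s := by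
  have ht : 0 < s + r^2 := by linarith
  have he : 0 < 1 - r^2 := by nlinarith
  have hr2 : 0 < r^2 := by positivity
  nlinarith [pow_pos ht 5, pow_pos ht 4,
    mul_pos he (pow_pos ht 4), mul_pos he (pow_pos ht 3),
    mul_pos (mul_pos he he) (pow_pos ht 3),
    mul_pos he (pow_pos ht 2),
    mul_pos (mul_pos he he) (pow_pos ht 2),
    mul_pos hr2 (mul_pos (mul_pos he he) (pow_pos ht 2)),
    mul_pos (mul_pos he he) ht,
    mul_pos (mul_pos (mul_pos he he) he) ht,
    mul_pos hr2 (mul_pos (mul_pos (mul_pos he he) he) ht),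
    mul_pos hr2 (mul_pos (mul_pos he he) he),
    mul_pos hr2 (mul_pos (mul_pos (mul_pos he he) he) he)]

lemma finalIneq (r c sn : ℝ) (h0 : 0 < r) (h1 : r < 1) (hsn : 0 < sn)
    (hc : -r < c) (hpy : c^2 + sn^2 = 1) :
    0 < 3 * ((r*c*(1+r*c) + r*sn*(r*sn)) / ((1+r*c)^2 + (r*sn)^2))
      - (1 + 2*((r*c*(3+r*c) + r*sn*(r*sn)) / ((3+r*c)^2 + (r*sn)^2)))
        * (((r*c*(3+r*c) - r*sn*(r*sn)) * ((3+r*c) + r*c*(3+r*c) - r*sn*(r*sn))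
           + (r*c*(r*sn) + r*sn*(3+r*c)) * (-(r*sn) + r*c*(r*sn) + r*sn*(3+r*c)))
          / (((3+r*c) + r*c*(3+r*c) - r*sn*(r*sn))^2
             + (-(r*sn) + r*c*(r*sn) + r*sn*(3+r*c))^2)) := by
  set s : ℝ := r*c with hs_def
  set v : ℝ := r*sn with hv_def
  have hv : 0 < v := by rw [hv_def]; positivity
  have hs1 : -r^2 < s := by rw [hs_def]; nlinarith
  have hs2 : s < r := by
    have hc1 : c < 1 := by nlinarith [sq_nonneg sn]
    rw [hs_def]; nlinarith
  have hsv : v^2 = r^2 - s^2 := by rw [hv_def, hs_def]; nlinarith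
  have hs1' : (-1:ℝ) < s := by nlinarith
  have hA : 0 < (1+s)^2 + v^2 := by nlinarith [sq_nonneg (1+s)]
  have hC : 0 < (3+s)^2 + v^2 := by nlinarith [sq_nonneg (3+s)]
  have hFFim : 0 < -v + s*v + v*(3+s) := by nlinarith
  have hM : 0 < ((3+s) + s*(3+s) - v*v)^2 + (-v + s*v + v*(3+s))^2 := by
    nlinarith [sq_nonneg ((3+s) + s*(3+s) - v*v), sq_nonneg (-v + s*v + v*(3+s))]
  have hNN := keyNN r s h0 h1 hs1 hs2
  have hstep1 : 3 * ((s*(1+s) + v*v) / ((1+s)^2 + v^2))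
      - (1 + 2*((s*(3+s) + v*v) / ((3+s)^2 + v^2)))
        * (((s*(3+s) - v*v) * ((3+s) + s*(3+s) - v*v)
           + (s*v + v*(3+s)) * (-v + s*v + v*(3+s)))
          / (((3+s) + s*(3+s) - v*v)^2 + (-v + s*v + v*(3+s))^2))
      = 3 * ((s*(1+s)+v*v) * ((3+s)^2+v^2) * (((3+s) + s*(3+s) - v*v)^2 + (-v + s*v + v*(3+s))^2)
          - (3+4*s+s^2+v^2) * ((1+s)^2+v^2)
            * ((s*(3+s) - v*v) * ((3+s) + s*(3+s) - v*v)
               + (s*v + v*(3+s)) * (-v + s*v + v*(3+s))))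
        / (((1+s)^2 + v^2) * (((3+s)^2 + v^2)
            * (((3+s) + s*(3+s) - v*v)^2 + (-v + s*v + v*(3+s))^2))) := by
    have hM' : 0 < ((1 + s) * (3 + s) - v ^ 2) ^ 2 + v ^ 2 * (-1 + s + (3 + s)) ^ 2 := by linarith
    field_simp
    ring
  have hnum : (s*(1+s)+v*v) * ((3+s)^2+v^2) * (((3+s) + s*(3+s) - v*v)^2 + (-v + s*v + v*(3+s))^2)
          - (3+4*s+s^2+v^2) * ((1+s)^2+v^2)
            * ((s*(3+s) - v*v) * ((3+s) + s*(3+s) - v*v)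
               + (s*v + v*(3+s)) * (-v + s*v + v*(3+s)))
      = 54*s + 144*s^2 + 156*s^3 + 80*s^4 + 16*s^5 + 72*r^2 + 186*r^2*s + 216*r^2*s^2
      + 128*r^2*s^3 + 32*r^2*s^4 - 24*r^4 - 30*r^4*s - 8*r^4*s^2 + 4*r^4*s^3 - 2*r^6*s := by
    linear_combination (72 - 24*v^2 + 186*s - 30*s*v^2 - 2*s*v^4 + 192*s^2 - 8*s^2*v^2 + 98*s^3
      + 24*s^4 + 2*s^5 - 24*r^2 - 30*r^2*s - 2*r^2*s*v^2 - 8*r^2*s^2 + 2*r^2*s^3 - 2*r^4*s) * hsv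
  rw [hstep1, hnum]
  apply div_pos (by linarith) (by positivity)


theorem g_r_deriv_pos (r : ℝ) (hr0 : 0 < r) (hr1 : r < 1) :
    ∀ θ : ℝ, 0 < θ → θ < π - Real.arccos r →
      0 < deriv (fun θ : ℝ =>
        3 * (1 + (r : ℂ) * Complex.exp (θ * Complex.I)).arg
          - (1 + (r : ℂ) * Complex.exp
              ((θ + 2 * (3 + (r : ℂ) * Complex.exp (θ * Complex.I)).arg) * Complex.I)).arg) θ := by
  intro θ hθ1 hθ2
  -- real trigonometric facts
  have hr1' : (-1:ℝ) ≤ r := by linarith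
  have hacos_pos : 0 < Real.arccos r := Real.arccos_pos.mpr hr1
  have hacos_nonneg : 0 ≤ Real.arccos r := hacos_pos.le
  have hacos_le : Real.arccos r ≤ π := Real.arccos_le_pi r
  have hθπ : θ < π := by linarith
  have hsin : 0 < Real.sin θ := Real.sin_pos_of_pos_of_lt_pi hθ1 hθπ
  have hcos : -r < Real.cos θ := by
    have h1 : Real.cos (π - Real.arccos r) < Real.cos θ := by
      apply Real.strictAntiOn_cos ⟨hθ1.le, hθπ.le⟩ ⟨by linarith, by linarith⟩ hθ2
    rwa [Real.cos_pi_sub, Real.cos_arccos hr1' hr1.le] at h1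
  have hsq : (r*Real.sin θ)^2 = r^2 - (r*Real.cos θ)^2 := by
    nlinarith [Real.sin_sq_add_cos_sq θ]
  have h1 : 0 < 3 + 2*(r*Real.cos θ) - r := by nlinarith
  have h2 : 0 < 3 + 2*(r*Real.cos θ) + r := by nlinarith
  have hv3 : (r*Real.sin θ)*((r*Real.sin θ)^2) = (r*Real.sin θ)*(r^2 - (r*Real.cos θ)^2) := by
    rw [hsq]
  -- rewrite function using Complex.log
  have hfeq : (fun θ : ℝ =>
        3 * (1 + (r : ℂ) * Complex.exp (θ * Complex.I)).arg
          - (1 + (r : ℂ) * Complex.exp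
              ((θ + 2 * (3 + (r : ℂ) * Complex.exp (θ * Complex.I)).arg) * Complex.I)).arg)
      = (fun x : ℝ =>
        3 * (Complex.log (1 + (r : ℂ) * Complex.exp (x * Complex.I))).im
          - (Complex.log (1 + (r : ℂ) * Complex.exp
              (((x + 2 * (Complex.log (3 + (r : ℂ) * Complex.exp (x * Complex.I))).im : ℝ) : ℂ)
                 * Complex.I))).im) := by
    funext x
    simp only [Complex.log_im]
    push_cast
    ring_nf
  -- complex setup
  set E : ℂ := Complex.exp ((θ:ℂ) * Complex.I) with hE_def
  have hEre : E.re = Real.cos θ := Complex.exp_ofReal_mul_I_re θ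
  have hEim : E.im = Real.sin θ := Complex.exp_ofReal_mul_I_im θ
  set z : ℂ := 1 + (r:ℂ) * E with hz_def
  set w : ℂ := 3 + (r:ℂ) * E with hw_def
  have hzre : z.re = 1 + r * Real.cos θ := by
    simp [hz_def, Complex.add_re, Complex.mul_re, hEre, hEim]
  have hzim : z.im = r * Real.sin θ := by
    simp [hz_def, Complex.add_im, Complex.mul_im, hEre, hEim]
  have hwre : w.re = 3 + r * Real.cos θ := by
    simp [hw_def, Complex.add_re, Complex.mul_re, hEre, hEim]
  have hwim : w.im = r * Real.sin θ := by
    simp [hw_def, Complex.add_im, Complex.mul_im, hEre, hEim]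
  have hzslit : z ∈ Complex.slitPlane := by
    rw [Complex.mem_slitPlane_iff]; left; rw [hzre]; nlinarith
  have hwslit : w ∈ Complex.slitPlane := by
    rw [Complex.mem_slitPlane_iff]; left; rw [hwre]; nlinarith
  have hw0 : w ≠ 0 := Complex.slitPlane_ne_zero hwslit
  have hz0 : z ≠ 0 := Complex.slitPlane_ne_zero hzslit
  -- derivative building blocks
  have hE' : HasDerivAt (fun x : ℝ => Complex.exp ((x:ℂ) * Complex.I)) (E * Complex.I) θ := by
    simpa using ((Complex.ofRealCLM.hasDerivAt (x := θ)).mul_const Complex.I).cexp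
  have hw' : HasDerivAt (fun x : ℝ => 3 + (r:ℂ) * Complex.exp ((x:ℂ) * Complex.I))
      ((r:ℂ) * (E * Complex.I)) θ := (hE'.const_mul _).const_add _
  have hz' : HasDerivAt (fun x : ℝ => 1 + (r:ℂ) * Complex.exp ((x:ℂ) * Complex.I))
      ((r:ℂ) * (E * Complex.I)) θ := (hE'.const_mul _).const_add _
  have hlogw : HasDerivAt (fun x : ℝ => (Complex.log (3 + (r:ℂ) * Complex.exp ((x:ℂ) * Complex.I))).im)
      (((r:ℂ) * (E * Complex.I) / w).im) θ := by
    exact Complex.imCLM.hasFDerivAt.comp_hasDerivAt θ (hw'.clog_real hwslit)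
  have hlogz : HasDerivAt (fun x : ℝ => (Complex.log (1 + (r:ℂ) * Complex.exp ((x:ℂ) * Complex.I))).im)
      (((r:ℂ) * (E * Complex.I) / z).im) θ := by
    exact Complex.imCLM.hasFDerivAt.comp_hasDerivAt θ (hz'.clog_real hzslit)
  -- psi chain
  set psid : ℝ := 1 + 2 * ((r:ℂ) * (E * Complex.I) / w).im with hpsid_def
  have hpsi : HasDerivAt (fun x : ℝ =>
      x + 2 * (Complex.log (3 + (r:ℂ) * Complex.exp ((x:ℂ) * Complex.I))).im) psid θ :=
    (hasDerivAt_id θ).add (hlogw.const_mul 2)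
  set psit : ℝ := θ + 2 * (Complex.log w).im with hpsit_def
  have hZf : HasDerivAt (fun x : ℝ => 1 + (r:ℂ) * Complex.exp
      (((x + 2 * (Complex.log (3 + (r:ℂ) * Complex.exp ((x:ℂ) * Complex.I))).im : ℝ) : ℂ) * Complex.I))
      ((r:ℂ) * (Complex.exp ((psit:ℂ) * Complex.I) * ((psid:ℂ) * Complex.I))) θ :=
    ((hpsi.ofReal_comp.mul_const Complex.I).cexp.const_mul _).const_add 1
  set Z : ℂ := 1 + (r:ℂ) * Complex.exp ((psit:ℂ) * Complex.I) with hZ_def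
  -- key identities
  have habs0 : ‖w‖ ≠ 0 := norm_ne_zero_iff.mpr hw0
  have hnsq_pos : 0 < Complex.normSq w := Complex.normSq_pos.mpr hw0
  have hnsqC : ((Complex.normSq w : ℝ) : ℂ) ≠ 0 := by exact_mod_cast hnsq_pos.ne'
  have hexpphi : Complex.exp ((((Complex.log w).im : ℝ) : ℂ) * Complex.I)
      = w / (‖w‖ : ℂ) := by
    rw [Complex.log_im, eq_div_iff (by exact_mod_cast habs0), mul_comm]
    exact Complex.norm_mul_exp_arg_mul_I w
  have hexpψ : Complex.exp ((psit:ℂ) * Complex.I) = E * w^2 / (Complex.normSq w : ℂ) := by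
    have h1 : ((psit:ℝ):ℂ) * Complex.I = (θ:ℂ) * Complex.I
        + ((((Complex.log w).im : ℝ):ℂ) * Complex.I + (((Complex.log w).im : ℝ):ℂ) * Complex.I) := by
      rw [hpsit_def]; push_cast; ring
    rw [h1, Complex.exp_add, Complex.exp_add, hexpphi, ← hE_def, div_mul_div_comm,
      ← Complex.ofReal_mul, ← sq (‖w‖), ← Complex.normSq_eq_norm_sq]
    ring
  set FF : ℂ := (starRingEnd ℂ) w + ((r:ℂ) * E) * w with hFF_def
  have hFFre : FF.re = (3 + r*Real.cos θ) + (r*Real.cos θ)*(3 + r*Real.cos θ)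
      - (r*Real.sin θ)*(r*Real.sin θ) := by
    simp [hFF_def, Complex.add_re, Complex.mul_re, hwre, hwim, hEre, hEim]
    ring
  have hFFim : FF.im = -(r*Real.sin θ) + (r*Real.cos θ)*(r*Real.sin θ)
      + (r*Real.sin θ)*(3 + r*Real.cos θ) := by
    simp [hFF_def, Complex.add_im, Complex.mul_im, hwre, hwim, hEre, hEim]
    ring
  have hFFim_pos : 0 < FF.im := by
    rw [hFFim]
    nlinarith [mul_pos hr0 hsin, mul_pos hr0 (mul_pos hr0 hsin)]
  have hFF0 : FF ≠ 0 := by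
    intro h
    rw [h] at hFFim_pos
    simp at hFFim_pos
  have hZeq : Z = w * FF / (Complex.normSq w : ℂ) := by
    rw [hZ_def, hexpψ, hFF_def]
    field_simp
    linear_combination -Complex.mul_conj w
  have hZim : 0 < Z.im := by
    rw [hZeq, Complex.div_ofReal_im]
    apply div_pos _ hnsq_pos
    rw [Complex.mul_im, hFFre, hFFim, hwre, hwim]
    nlinarith [mul_pos (mul_pos (mul_pos hr0 hsin) h1) h2, hv3]
  have hZslit : Z ∈ Complex.slitPlane := by
    rw [Complex.mem_slitPlane_iff]; right; exact hZim.ne'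
  have hZ0 : Z ≠ 0 := Complex.slitPlane_ne_zero hZslit
  -- total derivative
  have hlogZ : HasDerivAt (fun x : ℝ => (Complex.log (1 + (r:ℂ) * Complex.exp
        (((x + 2 * (Complex.log (3 + (r:ℂ) * Complex.exp ((x:ℂ) * Complex.I))).im : ℝ) : ℂ)
          * Complex.I))).im)
      (((r:ℂ) * (Complex.exp ((psit:ℂ) * Complex.I) * ((psid:ℂ) * Complex.I)) / Z).im) θ :=
    Complex.imCLM.hasFDerivAt.comp_hasDerivAt θ (hZf.clog_real hZslit)
  have hD : HasDerivAt (fun x : ℝ =>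
        3 * (Complex.log (1 + (r:ℂ) * Complex.exp ((x:ℂ) * Complex.I))).im
          - (Complex.log (1 + (r:ℂ) * Complex.exp
              (((x + 2 * (Complex.log (3 + (r:ℂ) * Complex.exp ((x:ℂ) * Complex.I))).im : ℝ) : ℂ)
                * Complex.I))).im)
      (3 * ((r:ℂ) * (E * Complex.I) / z).im
        - ((r:ℂ) * (Complex.exp ((psit:ℂ) * Complex.I) * ((psid:ℂ) * Complex.I)) / Z).im) θ :=
    (hlogz.const_mul 3).sub hlogZ
  rw [hfeq, hD.deriv]
  have hquot : (r:ℂ) * (Complex.exp ((psit:ℂ) * Complex.I) * ((psid:ℂ) * Complex.I)) / Z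
      = (psid:ℂ) * (Complex.I * ((r:ℂ) * E) * w / FF) := by
    rw [hexpψ, hZeq]
    field_simp
  rw [hquot]
  have him1 : ((psid:ℂ) * (Complex.I * ((r:ℂ) * E) * w / FF)).im
      = psid * (Complex.I * ((r:ℂ) * E) * w / FF).im := by
    simp [Complex.mul_im]
  rw [him1]
  have e1 : ((r:ℂ) * (E * Complex.I) / z).im
      = (r*Real.cos θ*(1+r*Real.cos θ) + r*Real.sin θ*(r*Real.sin θ))
        / ((1+r*Real.cos θ)^2 + (r*Real.sin θ)^2) := by
    rw [Complex.div_im, Complex.normSq_apply, hzre, hzim]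
    simp [Complex.mul_re, Complex.mul_im, hEre, hEim]
    ring
  have e3 : ((r:ℂ) * (E * Complex.I) / w).im
      = (r*Real.cos θ*(3+r*Real.cos θ) + r*Real.sin θ*(r*Real.sin θ))
        / ((3+r*Real.cos θ)^2 + (r*Real.sin θ)^2) := by
    rw [Complex.div_im, Complex.normSq_apply, hwre, hwim]
    simp [Complex.mul_re, Complex.mul_im, hEre, hEim]
    ring
  have e2 : (Complex.I * ((r:ℂ) * E) * w / FF).im
      = ((r*Real.cos θ*(3+r*Real.cos θ) - r*Real.sin θ*(r*Real.sin θ))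
            * ((3+r*Real.cos θ) + r*Real.cos θ*(3+r*Real.cos θ) - r*Real.sin θ*(r*Real.sin θ))
          + (r*Real.cos θ*(r*Real.sin θ) + r*Real.sin θ*(3+r*Real.cos θ))
            * (-(r*Real.sin θ) + r*Real.cos θ*(r*Real.sin θ) + r*Real.sin θ*(3+r*Real.cos θ)))
        / (((3+r*Real.cos θ) + r*Real.cos θ*(3+r*Real.cos θ) - r*Real.sin θ*(r*Real.sin θ))^2
           + (-(r*Real.sin θ) + r*Real.cos θ*(r*Real.sin θ) + r*Real.sin θ*(3+r*Real.cos θ))^2) := by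
    rw [Complex.div_im, Complex.normSq_apply, hFFre, hFFim]
    simp [Complex.mul_re, Complex.mul_im, hEre, hEim, hwre, hwim]
    ring
  rw [hpsid_def, e1, e2, e3]
  linarith [finalIneq r (Real.cos θ) (Real.sin θ) hr0 hr1 hsin hcos (Real.cos_sq_add_sin_sq θ)]
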